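/- Let (Ω, F, P) be a probability space, n ∈ ℕ, h > 0, and let ξ₀, …, ξ_{n−1} : Ω → ℝ be an independent family of square-integrable random variables with E[ξᵢ] = 0 and E[ξᵢ²] = h for every i. For each i, let Zᵢ : Ω → ℝ be square-integrable and measurable with respect to σ(ξ₀, …, ξ_{i−1}), and let A : Ω → ℝ be square-integrable. Then for every ε > 0, Var( A + Σ_{i=0}^{n−1} Zᵢ·ξᵢ ) ≥ (1 − ε)·h·Σ_{i=0}^{n−1} E[Zᵢ²] − (1/ε)·E[A²]. -/

import Mathlib

/-!
Write `T = ∑ᵢ Zᵢ ξᵢ`. For `i < j`, both `Zⱼ` and `Zᵢ ξᵢ Zⱼ` are measurable with respect to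
`σ(ξₖ : k < j)`, which is independent of `ξⱼ`; as `E[ξⱼ] = 0`, the terms of `T` are centred and
pairwise orthogonal, and `E[(Zⱼ ξⱼ)²] = E[Zⱼ²] E[ξⱼ²]`. Hence `E[T] = 0` and
`E[T²] = h ∑ E[Zᵢ²]` (discrete Itô isometry). Then `Var(A + T) = E[(A + T)²] - E[A]²`
`≥ E[(A + T)²] - E[A²]`, and expanding the square with `2at ≥ -εt² - a²/ε` gives the bound.
-/

open MeasureTheory ProbabilityTheory Finset

theorem weighted_sq_le_add_sq {ε : ℝ} (hε : 0 < ε) (a t : ℝ) :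
    (1 - ε) * t ^ 2 + (1 - 1 / ε) * a ^ 2 ≤ (a + t) ^ 2 := by
  have hdiff : (a + t) ^ 2 - ((1 - ε) * t ^ 2 + (1 - 1 / ε) * a ^ 2) = (ε * t + a) ^ 2 / ε := by
    field_simp
    ring
  have := div_nonneg (sq_nonneg (ε * t + a)) hε.le
  linarith

theorem sub_le_variance_add_of_integral_eq_zero {Ω : Type*} [MeasurableSpace Ω] {P : Measure Ω}
    [IsProbabilityMeasure P] {A T : Ω → ℝ} (hA : MemLp A 2 P) (hT : MemLp T 2 P)
    (hT0 : ∫ ω, T ω ∂P = 0) {ε : ℝ} (hε : 0 < ε) :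
    (1 - ε) * ∫ ω, T ω ^ 2 ∂P - 1 / ε * ∫ ω, A ω ^ 2 ∂P ≤ variance (fun ω => A ω + T ω) P := by
  have hmean : ∫ ω, A ω + T ω ∂P = ∫ ω, A ω ∂P := by
    rw [integral_add (hA.integrable one_le_two) (hT.integrable one_le_two), hT0, add_zero]
  have hA_sq : (∫ ω, A ω ∂P) ^ 2 ≤ ∫ ω, A ω ^ 2 ∂P := by
    have := variance_nonneg A P
    rw [variance_eq_sub hA] at this
    simpa only [Pi.pow_apply, sub_nonneg] using this
  have hyoung : (1 - ε) * ∫ ω, T ω ^ 2 ∂P + (1 - 1 / ε) * ∫ ω, A ω ^ 2 ∂P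
      ≤ ∫ ω, (A ω + T ω) ^ 2 ∂P := by
    rw [← integral_const_mul, ← integral_const_mul,
      ← integral_add (hT.integrable_sq.const_mul _) (hA.integrable_sq.const_mul _)]
    exact integral_mono ((hT.integrable_sq.const_mul _).add (hA.integrable_sq.const_mul _))
      (hA.add hT).integrable_sq fun ω => weighted_sq_le_add_sq hε (A ω) (T ω)
  rw [variance_eq_sub (X := fun ω => A ω + T ω) (hA.add hT)]
  simp only [Pi.pow_apply]
  rw [hmean]
  linarith

theorem integral_sq_sum_eq_sum_integral_sq {Ω ι : Type*} [MeasurableSpace Ω] {P : Measure Ω}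
    [Fintype ι] {X : ι → Ω → ℝ} (hX : ∀ i, MemLp (X i) 2 P)
    (horth : Pairwise fun i j => ∫ ω, X i ω * X j ω ∂P = 0) :
    ∫ ω, (∑ i, X i ω) ^ 2 ∂P = ∑ i, ∫ ω, X i ω ^ 2 ∂P := by
  have hint : ∀ i j, Integrable (fun ω => X i ω * X j ω) P := fun i j =>
    (hX i).integrable_mul (hX j)
  simp_rw [sq, sum_mul_sum]
  rw [integral_finsetSum _ fun i _ => integrable_finsetSum _ fun j _ => hint i j]
  refine sum_congr rfl fun i _ => ?_
  rw [integral_finsetSum _ fun j _ => hint i j, sum_eq_single i (fun j _ hji => horth hji.symm)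
    (fun hi => absurd (mem_univ i) hi)]

section PastSigma

variable {Ω ι β : Type*} [LinearOrder ι] [MeasurableSpace β]

abbrev pastSigma (ξ : ι → Ω → β) (i : ι) : MeasurableSpace Ω :=
  ⨆ j : ι, ⨆ _ : j < i, MeasurableSpace.comap (ξ j) inferInstance

variable {ξ : ι → Ω → β}

theorem comap_le_pastSigma {i j : ι} (hji : j < i) :
    MeasurableSpace.comap (ξ j) inferInstance ≤ pastSigma ξ i :=
  le_iSup₂ (f := fun k (_ : k < i) => MeasurableSpace.comap (ξ k) inferInstance) j hji

theorem pastSigma_mono : Monotone (pastSigma ξ) := fun _ _ hij =>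
  iSup₂_le fun _ hk => comap_le_pastSigma (hk.trans_le hij)

variable [MeasurableSpace Ω]

theorem pastSigma_le (hξ : ∀ i, Measurable (ξ i)) (i : ι) :
    pastSigma ξ i ≤ ‹MeasurableSpace Ω› :=
  iSup₂_le fun j _ => (hξ j).comap_le

theorem indep_pastSigma {P : Measure Ω} (hξ : ∀ i, Measurable (ξ i)) (hind : iIndepFun ξ P)
    (i : ι) : Indep (pastSigma ξ i) (MeasurableSpace.comap (ξ i) inferInstance) P := by
  have hdisj : Disjoint {j | j < i} {i} := Set.disjoint_singleton_right.2 (lt_irrefl i)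
  have := indep_iSup_of_disjoint (fun j => (hξ j).comap_le) hind.iIndep hdisj
  rwa [_root_.iSup_singleton] at this

theorem indepFun_of_measurable_pastSigma {P : Measure Ω} (hξ : ∀ i, Measurable (ξ i))
    (hind : iIndepFun ξ P) {i : ι} {γ : Type*} [MeasurableSpace γ] {W : Ω → γ}
    (hW : Measurable[pastSigma ξ i] W) : IndepFun W (ξ i) P :=
  (IndepFun_iff_Indep W (ξ i) P).2
    (indep_of_indep_of_le_left (indep_pastSigma hξ hind i) hW.comap_le)

end PastSigma

section DiscreteStochasticIntegral

variable {Ω ι : Type*} [MeasurableSpace Ω] [LinearOrder ι] {P : Measure Ω} {ξ Z : ι → Ω → ℝ}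

theorem integral_mul_eq_zero_of_measurable_pastSigma (hξ : ∀ i, Measurable (ξ i))
    (hind : iIndepFun ξ P) {i : ι} (hmean : ∫ ω, ξ i ω ∂P = 0) {W : Ω → ℝ}
    (hW : Measurable[pastSigma ξ i] W) : ∫ ω, W ω * ξ i ω ∂P = 0 := by
  have := (indepFun_of_measurable_pastSigma hξ hind hW).integral_mul_eq_mul_integral
    (hW.mono (pastSigma_le hξ i) le_rfl).aestronglyMeasurable (hξ i).aestronglyMeasurable
  simpa only [Pi.mul_apply, hmean, mul_zero] using this

theorem indepFun_sq_of_measurable_pastSigma (hξ : ∀ i, Measurable (ξ i))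
    (hind : iIndepFun ξ P) {i : ι} {W : Ω → ℝ} (hW : Measurable[pastSigma ξ i] W) :
    IndepFun (fun ω => W ω ^ 2) (fun ω => ξ i ω ^ 2) P :=
  (indepFun_of_measurable_pastSigma hξ hind hW).comp (measurable_id.pow_const 2)
    (measurable_id.pow_const 2)

theorem integral_sq_mul_of_measurable_pastSigma (hξ : ∀ i, Measurable (ξ i))
    (hind : iIndepFun ξ P) {i : ι} {W : Ω → ℝ} (hW : Measurable[pastSigma ξ i] W) :
    ∫ ω, (W ω * ξ i ω) ^ 2 ∂P = (∫ ω, W ω ^ 2 ∂P) * ∫ ω, ξ i ω ^ 2 ∂P := by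
  simp_rw [mul_pow]
  exact (indepFun_sq_of_measurable_pastSigma hξ hind hW).integral_mul_eq_mul_integral
    ((hW.mono (pastSigma_le hξ i) le_rfl).pow_const 2).aestronglyMeasurable
    ((hξ i).pow_const 2).aestronglyMeasurable

theorem memLp_two_mul_of_measurable_pastSigma (hξ : ∀ i, Measurable (ξ i))
    (hind : iIndepFun ξ P) {i : ι} (hξL2 : MemLp (ξ i) 2 P) {W : Ω → ℝ}
    (hW : Measurable[pastSigma ξ i] W) (hWL2 : MemLp W 2 P) :
    MemLp (fun ω => W ω * ξ i ω) 2 P := by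
  refine (memLp_two_iff_integrable_sq
    ((hW.mono (pastSigma_le hξ i) le_rfl).mul (hξ i)).aestronglyMeasurable).2 ?_
  simpa only [Pi.mul_def, mul_pow] using
    (indepFun_sq_of_measurable_pastSigma hξ hind hW).integrable_mul
      hWL2.integrable_sq hξL2.integrable_sq

theorem integral_mul_mul_eq_zero_of_lt (hξ : ∀ i, Measurable (ξ i)) (hind : iIndepFun ξ P)
    (hmean : ∀ i, ∫ ω, ξ i ω ∂P = 0) (hZ : ∀ i, Measurable[pastSigma ξ i] (Z i)) {i j : ι}
    (hij : i < j) : ∫ ω, (Z i ω * ξ i ω) * (Z j ω * ξ j ω) ∂P = 0 := by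
  have hW : Measurable[pastSigma ξ j] fun ω => Z i ω * ξ i ω * Z j ω :=
    (((hZ i).mono (pastSigma_mono hij.le) le_rfl).mul
      ((comap_measurable (ξ i)).mono (comap_le_pastSigma hij) le_rfl)).mul (hZ j)
  simp_rw [← mul_assoc]
  exact integral_mul_eq_zero_of_measurable_pastSigma hξ hind (hmean j) hW

variable [Fintype ι]

theorem integral_sum_mul_eq_zero [IsFiniteMeasure P] (hξ : ∀ i, Measurable (ξ i))
    (hind : iIndepFun ξ P)
    (hξL2 : ∀ i, MemLp (ξ i) 2 P) (hmean : ∀ i, ∫ ω, ξ i ω ∂P = 0)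
    (hZ : ∀ i, Measurable[pastSigma ξ i] (Z i)) (hZL2 : ∀ i, MemLp (Z i) 2 P) :
    ∫ ω, ∑ i, Z i ω * ξ i ω ∂P = 0 := by
  rw [integral_finsetSum _ fun i _ =>
    (memLp_two_mul_of_measurable_pastSigma hξ hind (hξL2 i) (hZ i) (hZL2 i)).integrable one_le_two]
  exact sum_eq_zero fun i _ =>
    integral_mul_eq_zero_of_measurable_pastSigma hξ hind (hmean i) (hZ i)

theorem integral_sq_sum_mul (hξ : ∀ i, Measurable (ξ i)) (hind : iIndepFun ξ P)
    (hξL2 : ∀ i, MemLp (ξ i) 2 P) (hmean : ∀ i, ∫ ω, ξ i ω ∂P = 0)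
    (hZ : ∀ i, Measurable[pastSigma ξ i] (Z i)) (hZL2 : ∀ i, MemLp (Z i) 2 P) :
    ∫ ω, (∑ i, Z i ω * ξ i ω) ^ 2 ∂P = ∑ i, (∫ ω, Z i ω ^ 2 ∂P) * ∫ ω, ξ i ω ^ 2 ∂P := by
  have horth : Pairwise fun i j => ∫ ω, (Z i ω * ξ i ω) * (Z j ω * ξ j ω) ∂P = 0 := by
    intro i j hij
    rcases hij.lt_or_gt with hlt | hgt
    · exact integral_mul_mul_eq_zero_of_lt hξ hind hmean hZ hlt
    · simp_rw [mul_comm (Z i _ * ξ i _)]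
      exact integral_mul_mul_eq_zero_of_lt hξ hind hmean hZ hgt
  rw [integral_sq_sum_eq_sum_integral_sq
    (fun i => memLp_two_mul_of_measurable_pastSigma hξ hind (hξL2 i) (hZ i) (hZL2 i)) horth]
  exact sum_congr rfl fun i _ => integral_sq_mul_of_measurable_pastSigma hξ hind (hZ i)

end DiscreteStochasticIntegral

theorem var_lower_bound_discrete_stochastic_integral_general
    {Ω : Type*} [MeasurableSpace Ω] (P : Measure Ω) [IsProbabilityMeasure P]
    (n : ℕ) (h : ℝ) (ξ Z : Fin n → Ω → ℝ)
    (hξmeas : ∀ i, Measurable (ξ i))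
    (hξindep : iIndepFun ξ P)
    (hξL2 : ∀ i, MemLp (ξ i) 2 P)
    (hξmean : ∀ i, ∫ ω, ξ i ω ∂P = 0)
    (hξvar : ∀ i, ∫ ω, (ξ i ω) ^ 2 ∂P = h)
    (hZL2 : ∀ i, MemLp (Z i) 2 P)
    (hZmeas : ∀ i : Fin n,
      Measurable[⨆ j : Fin n, ⨆ _ : j < i, MeasurableSpace.comap (ξ j) inferInstance] (Z i))
    (A : Ω → ℝ) (hA : MemLp A 2 P) :
    ∀ ε > 0, variance (fun ω => A ω + ∑ i, Z i ω * ξ i ω) P ≥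
      (1 - ε) * h * (∑ i, ∫ ω, (Z i ω) ^ 2 ∂P) - (1 / ε) * (∫ ω, (A ω) ^ 2 ∂P) := by
  intro ε hε
  have hT : MemLp (fun ω => ∑ i, Z i ω * ξ i ω) 2 P := memLp_finsetSum _ fun i _ =>
    memLp_two_mul_of_measurable_pastSigma hξmeas hξindep (hξL2 i) (hZmeas i) (hZL2 i)
  have hbound := sub_le_variance_add_of_integral_eq_zero hA hT
    (integral_sum_mul_eq_zero hξmeas hξindep hξL2 hξmean hZmeas hZL2) hε
  rw [integral_sq_sum_mul hξmeas hξindep hξL2 hξmean hZmeas hZL2] at hbound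
  simp only [hξvar, ← sum_mul] at hbound
  linarith

/-- with independent, square-integrable, mean-zero `ξᵢ` satisfying `E[ξᵢ²] = h`,
`Zᵢ` square-integrable and measurable w.r.t. `σ(ξ₀, …, ξ_{i−1})`, and `A` square-integrable,
for every `ε > 0`, `Var(A + Σᵢ Zᵢ·ξᵢ) ≥ (1 − ε)·h·Σᵢ E[Zᵢ²] − (1/ε)·E[A²]`. -/
theorem var_lower_bound_discrete_stochastic_integral
    {Ω : Type*} [MeasurableSpace Ω] (P : Measure Ω) [IsProbabilityMeasure P]
    (n : ℕ) (h : ℝ) (hh : 0 < h) (ξ Z : Fin n → Ω → ℝ)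
    (hξmeas : ∀ i, Measurable (ξ i))
    (hξindep : iIndepFun ξ P)
    (hξL2 : ∀ i, MemLp (ξ i) 2 P)
    (hξmean : ∀ i, ∫ ω, ξ i ω ∂P = 0)
    (hξvar : ∀ i, ∫ ω, (ξ i ω) ^ 2 ∂P = h)
    (hZL2 : ∀ i, MemLp (Z i) 2 P)
    (hZmeas : ∀ i : Fin n,
      Measurable[⨆ j : Fin n, ⨆ _ : j < i, MeasurableSpace.comap (ξ j) inferInstance] (Z i))
    (A : Ω → ℝ) (hA : MemLp A 2 P) :
    ∀ ε > 0, variance (fun ω => A ω + ∑ i, Z i ω * ξ i ω) P ≥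
      (1 - ε) * h * (∑ i, ∫ ω, (Z i ω) ^ 2 ∂P) - (1 / ε) * (∫ ω, (A ω) ^ 2 ∂P) :=
  var_lower_bound_discrete_stochastic_integral_general P n h ξ Z hξmeas hξindep hξL2 hξmean hξvar
    hZL2 hZmeas A hA
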